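/- The right ideal ⟨q+1⟩ generated by q+1 in the ring (ℍ[q], +, *) is a maximal right ideal, and it is quasi prime. -/

import Mathlib

/-- The quaternions ℍ. -/
abbrev Hq : Type := Quaternion ℝ

/-- A right ideal of a (possibly noncommutative) ring. -/
structure RightIdeal (R : Type) [Ring R] where
  carrier : Set R
  zero_mem : (0 : R) ∈ carrier
  add_mem : ∀ {x y : R}, x ∈ carrier → y ∈ carrier → x + y ∈ carrier
  mul_mem_right : ∀ {x : R} (y : R), x ∈ carrier → x * y ∈ carrier

/-- The right ideal generated by a set. -/
def RightIdeal.span {R : Type} [Ring R] (s : Set R) : RightIdeal R where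
  carrier := {x | ∀ I : RightIdeal R, s ⊆ I.carrier → x ∈ I.carrier}
  zero_mem := fun I _ => I.zero_mem
  add_mem := fun hx hy I hs => I.add_mem (hx I hs) (hy I hs)
  mul_mem_right := fun y hx I hs => I.mul_mem_right y (hx I hs)

/-- The regular conjugate `P^c` of a one-variable slice regular polynomial `P = Σ q^ℓ a_ℓ`,
namely `P^c = Σ q^ℓ (conj a_ℓ)`.  (The ring ℍ[q] with the slice product coincides with
`Polynomial Hq` with its usual multiplication.) -/
noncomputable def pconj (P : Polynomial Hq) : Polynomial Hq :=
  ∑ k ∈ P.support, Polynomial.X ^ k * Polynomial.C (star (P.coeff k))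

/-- The symmetrization `P^s = P * P^c`. -/
noncomputable def psymm (P : Polynomial Hq) : Polynomial Hq := P * pconj P

/-- A right ideal `I` is quasi prime if `P*Q ∈ I` implies `P ∈ I` or `Q^s ∈ I`. -/
def QuasiPrime (I : RightIdeal (Polynomial Hq)) : Prop :=
  ∀ P Q : Polynomial Hq, P * Q ∈ I.carrier → P ∈ I.carrier ∨ psymm Q ∈ I.carrier

/-- A right ideal `I` is completely prime if `P*Q ∈ I` and `P*I ⊆ I` imply
`P ∈ I` or `Q ∈ I`. -/
def CompletelyPrime (I : RightIdeal (Polynomial Hq)) : Prop :=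
  ∀ P Q : Polynomial Hq, P * Q ∈ I.carrier → (∀ R ∈ I.carrier, P * R ∈ I.carrier) →
    P ∈ I.carrier ∨ Q ∈ I.carrier

/-- The (right) radical `√I`: the intersection of all completely prime right ideals
containing `I`. -/
def radicalSet (I : RightIdeal (Polynomial Hq)) : Set (Polynomial Hq) :=
  ⋂ J ∈ {J : RightIdeal (Polynomial Hq) | CompletelyPrime J ∧ I.carrier ⊆ J.carrier}, J.carrier

/-!
Since `-1` is central in `ℍ`, evaluation at `-1` is a ring homomorphism `ℍ[q] → ℍ`, and division
by the monic `q + 1` shows that its kernel is exactly the right ideal `⟨q + 1⟩`. The quotient is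
thus the division ring `ℍ`: any polynomial outside `⟨q + 1⟩` is congruent to a nonzero constant,
which is a unit, giving maximality; and `ℍ` has no zero divisors, so `P * Q ∈ ⟨q + 1⟩` forces
`P ∈ ⟨q + 1⟩` or `Q ∈ ⟨q + 1⟩`, and in the latter case also `Q^s = Q * Q^c ∈ ⟨q + 1⟩`.
-/

namespace Polynomial

section Central

variable {R : Type*} [Ring R] {c : R}

theorem eval_mul_of_forall_commute (hc : ∀ a, Commute a c) (p q : R[X]) :
    (p * q).eval c = p.eval c * q.eval c :=
  eval₂_mul_noncomm _ _ fun _ => hc _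

theorem modByMonic_X_sub_C_eq_C_eval_of_forall_commute (hc : ∀ a, Commute a c) (p : R[X]) :
    p %ₘ (X - C c) = C (p.eval c) := by
  nontriviality R
  have hdeg : (p %ₘ (X - C c)).degree ≤ 0 := Nat.WithBot.lt_one_iff_le_zero.mp <|
    degree_X_sub_C c ▸ degree_modByMonic_lt p (monic_X_sub_C c)
  have heval : (p %ₘ (X - C c)).eval c = p.eval c := by
    rw [modByMonic_eq_sub_mul_div, eval_sub, eval_mul_of_forall_commute hc, eval_sub, eval_X,
      eval_C, sub_self, zero_mul, sub_zero]
  rw [eq_C_of_degree_le_zero hdeg, eval_C] at heval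
  rw [eq_C_of_degree_le_zero hdeg, heval]

theorem X_sub_C_dvd_iff_eval_eq_zero_of_forall_commute (hc : ∀ a, Commute a c) {p : R[X]} :
    X - C c ∣ p ↔ p.eval c = 0 := by
  rw [← modByMonic_eq_zero_iff_dvd (monic_X_sub_C c),
    modByMonic_X_sub_C_eq_C_eval_of_forall_commute hc, C_eq_zero]

theorem X_sub_C_dvd_sub_C_eval_of_forall_commute (hc : ∀ a, Commute a c) (p : R[X]) :
    X - C c ∣ p - C (p.eval c) := by
  rw [X_sub_C_dvd_iff_eval_eq_zero_of_forall_commute hc, eval_sub, eval_C, sub_self]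

end Central

end Polynomial

namespace RightIdeal

variable {R : Type} [Ring R]

def IsMaximal (I : RightIdeal R) : Prop :=
  I.carrier ≠ Set.univ ∧ ∀ J : RightIdeal R, I.carrier ⊂ J.carrier → J.carrier = Set.univ

theorem mem_span_singleton {a x : R} : x ∈ (span {a}).carrier ↔ a ∣ x := by
  let multiples : RightIdeal R :=
    { carrier := {x | a ∣ x}
      zero_mem := dvd_zero a
      add_mem := dvd_add
      mul_mem_right := fun y hx => Dvd.dvd.mul_right hx y }
  refine ⟨fun hx => hx multiples (Set.singleton_subset_iff.mpr dvd_rfl), ?_⟩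
  rintro ⟨y, rfl⟩ I haI
  exact I.mul_mem_right y (haI rfl)

theorem carrier_eq_univ_of_one_mem {I : RightIdeal R} (h : (1 : R) ∈ I.carrier) :
    I.carrier = Set.univ :=
  Set.eq_univ_of_forall fun x => one_mul x ▸ I.mul_mem_right x h

end RightIdeal

open Polynomial RightIdeal

section Central

variable {D : Type} {c : D}

theorem mem_span_X_sub_C_iff [Ring D] (hc : ∀ a, Commute a c) {p : D[X]} :
    p ∈ (span {X - C c}).carrier ↔ p.eval c = 0 := by
  rw [mem_span_singleton, X_sub_C_dvd_iff_eval_eq_zero_of_forall_commute hc]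

theorem isMaximal_span_X_sub_C [DivisionRing D] (hc : ∀ a, Commute a c) :
    (span {X - C c}).IsMaximal := by
  refine ⟨fun h => ?_, fun J hJ => ?_⟩
  · have h1 : (1 : D[X]) ∈ (span {X - C c}).carrier := h ▸ Set.mem_univ _
    simp [mem_span_X_sub_C_iff hc] at h1
  · obtain ⟨p, hpJ, hp⟩ := Set.exists_of_ssubset hJ
    rw [mem_span_X_sub_C_iff hc] at hp
    have hdiff : p - C (p.eval c) ∈ J.carrier :=
      hJ.subset (mem_span_singleton.mpr (X_sub_C_dvd_sub_C_eval_of_forall_commute hc p))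
    have hconst : C (p.eval c) ∈ J.carrier := by
      simpa using J.add_mem hpJ (J.mul_mem_right (-1) hdiff)
    apply carrier_eq_univ_of_one_mem
    simpa [← C_mul, mul_inv_cancel₀ hp] using J.mul_mem_right (C (p.eval c)⁻¹) hconst

theorem mem_or_mem_of_mul_mem_span_X_sub_C [Ring D] [NoZeroDivisors D] (hc : ∀ a, Commute a c)
    {p q : D[X]} (hpq : p * q ∈ (span {X - C c}).carrier) :
    p ∈ (span {X - C c}).carrier ∨ q ∈ (span {X - C c}).carrier := by
  simp only [mem_span_X_sub_C_iff hc, eval_mul_of_forall_commute hc] at hpq ⊢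
  exact mul_eq_zero.mp hpq

end Central

/-- The right ideal `⟨q+1⟩` of ℍ[q] is a maximal right ideal, and it is quasi prime. -/
theorem span_linear_maximal_quasiPrime :
    ((RightIdeal.span {(Polynomial.X + 1 : Polynomial Hq)}).carrier ≠ Set.univ ∧
      ∀ J : RightIdeal (Polynomial Hq),
        (RightIdeal.span {(Polynomial.X + 1 : Polynomial Hq)}).carrier ⊂ J.carrier →
          J.carrier = Set.univ) ∧
    QuasiPrime (RightIdeal.span {(Polynomial.X + 1 : Polynomial Hq)}) := by
  have hX : (X + 1 : Hq[X]) = X - C (-1) := by rw [C_neg, C_1, sub_neg_eq_add]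
  have hc : ∀ a : Hq, Commute a (-1) := Commute.neg_one_right
  rw [hX]
  refine ⟨isMaximal_span_X_sub_C hc, fun P Q hPQ => ?_⟩
  exact (mem_or_mem_of_mul_mem_span_X_sub_C hc hPQ).imp_right
    fun hQ => (span {X - C (-1)}).mul_mem_right (pconj Q) hQ
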